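/- Let T be a non-strongly connected, non-transitive tournament on a vertex set V with |V| = n ≥ 9, and let T' be a tournament on V that is {−3}-hypomorphic to T. Let X ∈ P̃(T) be such that T[X] is strongly connected and |X| ≥ 3, and let a ∈ V∖X. Then T'[X] is strongly connected, X ∈ P̃(T'), and a dominates every vertex of X in T if and only if a dominates every vertex of X in T'. -/

import Mathlib

/-- A (finite) tournament on a vertex type `V`: for each pair of distinct
vertices exactly one arc. -/
structure Tournament (V : Type*) where
  arc : V → V → Prop
  irrefl : ∀ x, ¬ arc x x
  total : ∀ x y, x ≠ y → (arc x y ↔ ¬ arc y x)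

namespace Tournament

variable {V W : Type*}

/-- The dual tournament, obtained by reversing all arcs. -/
def dual (T : Tournament V) : Tournament V where
  arc x y := T.arc y x
  irrefl x := T.irrefl x
  total x y h := T.total y x (Ne.symm h)

/-- The subtournament induced on a subset `X` of the vertex set. -/
def restrict (T : Tournament V) (X : Set V) : Tournament X where
  arc x y := T.arc x y
  irrefl x := T.irrefl x
  total x y h := T.total x y (fun e => h (Subtype.ext e))

/-- Isomorphism of tournaments: an arc-preserving bijection. -/
def Iso (T : Tournament V) (T' : Tournament W) : Prop :=
  ∃ e : V ≃ W, ∀ x y, T.arc x y ↔ T'.arc (e x) (e y)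

/-- `I` is an interval of `T`: every vertex outside `I` dominates all of `I`
or is dominated by all of `I`. -/
def IsInterval (T : Tournament V) (I : Set V) : Prop :=
  ∀ x ∉ I, (∀ y ∈ I, T.arc x y) ∨ (∀ y ∈ I, T.arc y x)

/-- A tournament is indecomposable if all its intervals are trivial. -/
def Indecomposable (T : Tournament V) : Prop :=
  ∀ I : Set V, T.IsInterval I → I = ∅ ∨ I = Set.univ ∨ ∃ x, I = {x}

def Decomposable (T : Tournament V) : Prop := ¬ T.Indecomposable

/-- Transitive tournament (a linear order). -/
def Transitive (T : Tournament V) : Prop :=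
  ∀ x y z, T.arc x y → T.arc y z → T.arc x z

/-- An almost transitive tournament is obtained from a transitive tournament
with at least 3 vertices by reversing the arc between its two extremal
vertices. -/
def AlmostTransitive [Fintype V] (T : Tournament V) : Prop :=
  3 ≤ Fintype.card V ∧
  ∃ T₀ : Tournament V, T₀.Transitive ∧
    ∃ a b : V, a ≠ b ∧ (∀ y, y ≠ a → T₀.arc a y) ∧ (∀ y, y ≠ b → T₀.arc y b) ∧
      T.arc b a ∧
      ∀ x y, ¬ ((x = a ∧ y = b) ∨ (x = b ∧ y = a)) → (T.arc x y ↔ T₀.arc x y)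

/-- Strong connectedness: a directed path between any two distinct vertices. -/
def StronglyConnected (T : Tournament V) : Prop :=
  ∀ x y : V, x ≠ y → Relation.TransGen T.arc x y

/-- `{k}`-hypomorphy: the induced subtournaments on every `k`-element set of
vertices are isomorphic. -/
def Hypo (T T' : Tournament V) (k : ℕ) : Prop :=
  ∀ X : Set V, X.ncard = k → (T.restrict X).Iso (T'.restrict X)

/-- `{-k}`-hypomorphy, i.e. `{n-k}`-hypomorphy where `n` is the number of
vertices. -/
def MinusHypo [Fintype V] (T T' : Tournament V) (k : ℕ) : Prop :=
  Hypo T T' (Fintype.card V - k)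

/-- Self duality. -/
def SelfDual (T : Tournament V) : Prop := T.Iso T.dual

/-- `{-k}`-self duality: removing any `k` vertices yields a self dual
tournament. -/
def MinusSelfDual (T : Tournament V) (k : ℕ) : Prop :=
  ∀ X : Set V, X.ncard = k → (T.restrict Xᶜ).SelfDual

/-- `{-k}`-reconstructibility: every tournament `{-k}`-hypomorphic to `T` is
isomorphic to `T`. -/
def MinusReconstructible [Fintype V] (T : Tournament V) (k : ℕ) : Prop :=
  ∀ T' : Tournament V, MinusHypo T T' k → T.Iso T'

/-- Strong interval. -/
def IsStrongInterval (T : Tournament V) (X : Set V) : Prop :=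
  T.IsInterval X ∧ ∀ Y : Set V, T.IsInterval Y → (X ∩ Y).Nonempty → X ⊆ Y ∨ Y ⊆ X

/-- `P T` : the maximal strong intervals of `T` distinct from the full vertex
set. -/
def P (T : Tournament V) : Set (Set V) :=
  {X | X.Nonempty ∧ X ≠ Set.univ ∧ T.IsStrongInterval X ∧
    ∀ Y : Set V, Y ≠ Set.univ → T.IsStrongInterval Y → X ⊆ Y → X = Y}

/-- `Ptilde T` : equals `P T` when `T` is strongly connected; otherwise it
consists of the members of `P T` of size at least 2 together with the maximal
unions of consecutive singleton members (i.e. the maximal intervals of `T` all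
of whose elements are singleton members of `P T`). -/
def Ptilde (T : Tournament V) : Set (Set V) :=
  {A | (T.StronglyConnected ∧ A ∈ T.P) ∨
    (¬ T.StronglyConnected ∧
      ((A ∈ T.P ∧ 2 ≤ A.ncard) ∨
        (A.Nonempty ∧ (∀ x ∈ A, ({x} : Set V) ∈ T.P) ∧ T.IsInterval A ∧
          ∀ B : Set V, A ⊆ B → (∀ x ∈ B, ({x} : Set V) ∈ T.P) →
            T.IsInterval B → A = B)))}

/-- Equality of the quotients of `T` and `T'` by a common interval partition
`Part`: between any two distinct blocks, the arcs of `T` and `T'` agree. -/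
def QuotientEq (T T' : Tournament V) (Part : Set (Set V)) : Prop :=
  ∀ X ∈ Part, ∀ Y ∈ Part, X ≠ Y → ∀ x ∈ X, ∀ y ∈ Y, (T.arc x y ↔ T'.arc x y)

/-- The set of vertices outside `I` dominated by every vertex of `I`. -/
def Iplus (T : Tournament V) (I : Set V) : Set V :=
  {x | x ∉ I ∧ ∀ y ∈ I, T.arc y x}

/-- The set of vertices outside `I` dominating every vertex of `I`. -/
def Iminus (T : Tournament V) (I : Set V) : Set V :=
  {x | x ∉ I ∧ ∀ y ∈ I, T.arc x y}

/-- The 3-cycle `C₃`. -/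
def C3Tour : Tournament (Fin 3) where
  arc x y := (x = 0 ∧ y = 1) ∨ (x = 1 ∧ y = 2) ∨ (x = 2 ∧ y = 0)
  irrefl := by decide
  total := by decide

/-- The transitive tournament `O_q` on `q` vertices. -/
def LinOrd (q : ℕ) : Tournament (Fin q) where
  arc x y := x < y
  irrefl x := lt_irrefl x
  total x y h := by
    constructor
    · exact fun hxy hyx => lt_asymm hxy hyx
    · intro hyx
      exact lt_of_le_of_ne (not_lt.mp hyx) h

/-- The positive diamond `δ⁺` (on `{0,1,2,3}`, cycle `0→1→2→0`, all dominating
the center `3`). -/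
def DeltaPlus : Tournament (Fin 4) where
  arc x y := (x = 0 ∧ y = 1) ∨ (x = 1 ∧ y = 2) ∨ (x = 2 ∧ y = 0) ∨
    (x = 0 ∧ y = 3) ∨ (x = 1 ∧ y = 3) ∨ (x = 2 ∧ y = 3)
  irrefl := by decide
  total := by decide

/-- The negative diamond `δ⁻`. -/
def DeltaMinus : Tournament (Fin 4) := DeltaPlus.dual

/-- `T` embeds a diamond: some 4-element subset of the vertices induces a
diamond. -/
def EmbedsDiamond (T : Tournament V) : Prop :=
  ∃ X : Set V, X.ncard = 4 ∧
    ((T.restrict X).Iso DeltaPlus ∨ (T.restrict X).Iso DeltaMinus)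

/-- `X` is a positive diamond of `T` with center `d`. -/
def IsPosDiamond (T : Tournament V) (X : Set V) (d : V) : Prop :=
  X.ncard = 4 ∧ d ∈ X ∧ (T.restrict X).Iso DeltaPlus ∧
    (T.restrict (X \ {d})).Iso C3Tour ∧ ∀ y ∈ X \ {d}, T.arc y d

/-- `X` is a negative diamond of `T` with center `d`. -/
def IsNegDiamond (T : Tournament V) (X : Set V) (d : V) : Prop :=
  X.ncard = 4 ∧ d ∈ X ∧ (T.restrict X).Iso DeltaMinus ∧
    (T.restrict (X \ {d})).Iso C3Tour ∧ ∀ y ∈ X \ {d}, T.arc d y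

/-- The tournament obtained from `H` by dilating the vertex `x` by `R`. -/
def Dilate {α β : Type*} (H : Tournament α) (x : α) (R : Tournament β) :
    Tournament ({y : α // y ≠ x} ⊕ β) where
  arc u v :=
    match u, v with
    | .inl y, .inl z => H.arc y.1 z.1
    | .inl y, .inr _ => H.arc y.1 x
    | .inr _, .inl z => H.arc x z.1
    | .inr u, .inr v => R.arc u v
  irrefl u := by
    cases u with
    | inl y => exact H.irrefl y.1
    | inr u => exact R.irrefl u
  total u v h := by
    cases u with
    | inl y =>
      cases v with
      | inl z =>
        exact H.total y.1 z.1 (fun e => h (congrArg Sum.inl (Subtype.ext e)))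
      | inr v => exact H.total y.1 x y.2
    | inr u =>
      cases v with
      | inl z => exact H.total x z.1 (Ne.symm z.2)
      | inr v => exact R.total u v (fun e => h (congrArg Sum.inr e))

/-- The class `I_{n,K}` (for `K` a set of positive integers representing the
negative indices): tournaments on `n` vertices which are indecomposable, not
self dual, and `{-k}`-self dual for every `k ∈ K`. -/
def ClassI (n : ℕ) (K : Set ℕ) (R : Tournament (Fin n)) : Prop :=
  R.Indecomposable ∧ ¬ R.SelfDual ∧ ∀ k ∈ K, R.MinusSelfDual k

/-- Membership (up to isomorphism) in the class
`Ω_n = C₃(I_{n-2,{-1,-2,-3}}) ∪ O₃(I_{n-2,{-1,-2,-3}}) ∪ O₂(I_{n-1,{-2,-3}})`. -/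
def InOmega (n : ℕ) (T : Tournament V) : Prop :=
  (∃ R : Tournament (Fin (n - 2)), ClassI (n - 2) {1, 2, 3} R ∧
    ∃ x : Fin 3, T.Iso (Dilate C3Tour x R)) ∨
  (∃ R : Tournament (Fin (n - 2)), ClassI (n - 2) {1, 2, 3} R ∧
    ∃ x : Fin 3, T.Iso (Dilate (LinOrd 3) x R)) ∨
  (∃ R : Tournament (Fin (n - 1)), ClassI (n - 1) {2, 3} R ∧
    ∃ x : Fin 2, T.Iso (Dilate (LinOrd 2) x R))

end Tournament

/-!
Kelly-type counting turns `{-3}`-hypomorphy on at least seven vertices into local equalities: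
`T` and `T'` have the same cyclic triangles as vertex sets, and every 3-set lies in equally many
copies of `δ⁻` in both. In a strongly connected tournament every nontrivial bipartition is
crossed by a cyclic triangle, so strong connectivity of subtournaments, and with it the strongly
connected components, are the same in `T` and `T'`; the nontrivial component `X` of `T` is thus
a member of `P̃(T')`. Finally, if `a → X` in `T` but `X → a` in `T'`, then `a` and a triangle
of `X` span `δ⁻` in `T`, a copy of `δ⁻` in `T'` through `a` and two triangle vertices yields a
cyclic triangle of `T'` through `a` and `X`, and this triangle, read in `T`, puts `a` into `X`.
-/

namespace Tournament

open Relation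

variable {V : Type*} {T T' : Tournament V}

theorem arc_asymm {x y : V} (h : T.arc x y) : ¬ T.arc y x :=
  (T.total x y (fun e => T.irrefl x (e ▸ h))).mp h

theorem ne_of_arc {x y : V} (h : T.arc x y) : x ≠ y := by
  rintro rfl
  exact T.irrefl x h

theorem arc_of_not_arc {x y : V} (hne : x ≠ y) (h : ¬ T.arc y x) : T.arc x y :=
  (T.total x y hne).mpr h

theorem Iso.symm {W : Type*} {T' : Tournament W} (h : T.Iso T') : T'.Iso T := by
  obtain ⟨e, he⟩ := h
  exact ⟨e.symm, fun x y => by simpa using (he (e.symm x) (e.symm y)).symm⟩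

theorem MinusHypo.symm [Fintype V] {m : ℕ} (h : T.MinusHypo T' m) : T'.MinusHypo T m :=
  fun X hX => (h X hX).symm

def Cyc (T : Tournament V) (x y z : V) : Prop := T.arc x y ∧ T.arc y z ∧ T.arc z x

theorem Cyc.rotate {x y z : V} (h : T.Cyc x y z) : T.Cyc y z x := ⟨h.2.1, h.2.2, h.1⟩

section StrongConnectivity

/-- A closed walk `x (→ u) ⇝ y → x` whose ends lie on different sides of `A` contains a cyclic
triangle crossing `A`. Along the path `u → u' ⇝ y`, either `x u y` or `x u u'` is such a
triangle, or the walk can be restarted at `u` or shortened by the chord `x → u'`. -/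
theorem no_crossing_cyc_aux {A : Set V} (hA : ∀ x y z, T.Cyc x y z → (x ∈ A ↔ y ∈ A))
    {u y : V} (h : ReflTransGen T.arc u y) :
    ∀ x, (x ∈ A ↔ y ∉ A) → T.arc y x → (x = u ∨ T.arc x u) → False := by
  induction h using ReflTransGen.head_induction_on with
  | refl =>
    rintro x hxy hyx (rfl | hxy')
    · tauto
    · exact arc_asymm hyx hxy'
  | @head u u' huu' _ ih =>
    rintro x hxy hyx (rfl | hxu)
    · exact ih x hxy hyx (Or.inr huu')
    by_cases hside : u ∈ A ↔ x ∈ A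
    · by_cases huy : u = y
      · subst huy
        exact arc_asymm hyx hxu
      by_cases harc : T.arc u y
      · have h1 := hA _ _ _ ⟨hxu, harc, hyx⟩
        have h2 := hA _ _ _ (Cyc.rotate ⟨hxu, harc, hyx⟩)
        tauto
      · exact ih u (by tauto) (arc_of_not_arc (Ne.symm huy) harc) (Or.inr huu')
    · by_cases hu'x : u' = x
      · exact ih x hxy hyx (Or.inl hu'x.symm)
      by_cases harc : T.arc x u'
      · exact ih x hxy hyx (Or.inr harc)
      · have := hA _ _ _ ⟨hxu, huu', arc_of_not_arc hu'x harc⟩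
        tauto

theorem StronglyConnected.mem_iff_mem_of_cyc (hT : T.StronglyConnected) {A : Set V}
    (hA : ∀ x y z, T.Cyc x y z → (x ∈ A ↔ y ∈ A)) (a b : V) : a ∈ A ↔ b ∈ A := by
  by_contra hab
  have hne : a ≠ b := by rintro rfl; exact hab Iff.rfl
  by_cases hba : T.arc b a
  · exact no_crossing_cyc_aux hA (hT a b hne).to_reflTransGen a (by tauto) hba (Or.inl rfl)
  · exact no_crossing_cyc_aux hA (hT b a hne.symm).to_reflTransGen b (by tauto)
      (arc_of_not_arc hne hba) (Or.inl rfl)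

theorem StronglyConnected.exists_cyc (hT : T.StronglyConnected) {x y : V} (hxy : x ≠ y) :
    ∃ p q r, T.Cyc p q r := by
  by_contra! h
  have := hT.mem_iff_mem_of_cyc (A := {x}) (fun p q r hc => (h p q r hc).elim) x y
  exact hxy (this.mp rfl).symm

theorem StronglyConnected.exists_cyc_of_restrict {X : Set V}
    (hX : (T.restrict X).StronglyConnected) {u v : V} (hu : u ∈ X) (hv : v ∈ X)
    (huv : u ≠ v) :
    ∃ p ∈ X, ∃ q ∈ X, ∃ r ∈ X, T.Cyc p q r := by
  obtain ⟨p, q, r, h⟩ :=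
    hX.exists_cyc (x := ⟨u, hu⟩) (y := ⟨v, hv⟩) fun e => huv (congrArg Subtype.val e)
  exact ⟨p, p.2, q, q.2, r, r.2, h⟩

theorem StronglyConnected.of_cyc (hT : T.StronglyConnected)
    (h : ∀ x y z, T.Cyc x y z → T'.Cyc x y z ∨ T'.Cyc x z y) : T'.StronglyConnected := by
  intro u v huv
  by_contra huv'
  set A := {w | ReflTransGen T'.arc u w}
  have hclosed : ∀ {w w'}, w ∈ A → T'.arc w w' → w' ∈ A := fun hw h => hw.tail h
  have hA' : ∀ x y z, T'.Cyc x y z → (x ∈ A ↔ y ∈ A) ∧ (x ∈ A ↔ z ∈ A) :=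
    fun _ _ _ hc =>
      ⟨⟨fun hx => hclosed hx hc.1, fun hy => hclosed (hclosed hy hc.2.1) hc.2.2⟩,
        ⟨fun hx => hclosed (hclosed hx hc.1) hc.2.1, fun hz => hclosed hz hc.2.2⟩⟩
  have hA : ∀ x y z, T.Cyc x y z → (x ∈ A ↔ y ∈ A) := fun x y z hc => by
    rcases h x y z hc with hc' | hc'
    · exact (hA' x y z hc').1
    · exact (hA' x z y hc').2
  have hv : v ∈ A := (hT.mem_iff_mem_of_cyc hA u v).mp ReflTransGen.refl
  exact huv' ((reflTransGen_iff_eq_or_transGen.mp hv).resolve_left huv.symm)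

theorem StronglyConnected.restrict_of_cyc {X : Set V} (hX : (T.restrict X).StronglyConnected)
    (h : ∀ x y z, T.Cyc x y z → T'.Cyc x y z ∨ T'.Cyc x z y) :
    (T'.restrict X).StronglyConnected :=
  hX.of_cyc fun p q r => h p q r

end StrongConnectivity

section Components

open Set

def scc (T : Tournament V) (x : V) : Set V :=
  {y | ReflTransGen T.arc x y ∧ ReflTransGen T.arc y x}

theorem mem_scc_self (x : V) : x ∈ T.scc x := ⟨ReflTransGen.refl, ReflTransGen.refl⟩

theorem isInterval_dual {Y : Set V} : T.dual.IsInterval Y ↔ T.IsInterval Y :=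
  forall₂_congr fun _ _ => or_comm

theorem IsInterval.reflTransGen_out {Y : Set V} (hY : T.IsInterval Y) {u c y : V}
    (hc : c ∉ Y) (hu : u ∈ Y) (hy : y ∈ Y) (h : ReflTransGen T.arc u c) :
    ReflTransGen T.arc y c := by
  induction h using ReflTransGen.head_induction_on with
  | refl => exact absurd hu hc
  | @head u u' huu' hu'c ih =>
    by_cases hu' : u' ∈ Y
    · exact ih hu'
    rcases hY u' hu' with hdom | hdom
    · exact absurd (hdom u hu) (arc_asymm huu')
    · exact hu'c.head (hdom y hy)

theorem IsInterval.reflTransGen_in {Y : Set V} (hY : T.IsInterval Y) {u c y : V}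
    (hc : c ∉ Y) (hu : u ∈ Y) (hy : y ∈ Y) (h : ReflTransGen T.arc c u) :
    ReflTransGen T.arc c y :=
  reflTransGen_swap.mp <|
    (isInterval_dual.mpr hY).reflTransGen_out hc hu hy (reflTransGen_swap.mpr h)

theorem isInterval_scc (x : V) : T.IsInterval (T.scc x) := by
  intro z hz
  by_cases hxz : ReflTransGen T.arc x z
  · refine Or.inr fun w hw => arc_of_not_arc (fun e => hz (e ▸ hw)) fun hzw => ?_
    exact hz ⟨hxz, hw.2.head hzw⟩
  · refine Or.inl fun w hw => arc_of_not_arc (fun e => hz (e ▸ hw)) fun hwz => ?_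
    exact hxz (hw.1.tail hwz)

theorem isStrongInterval_scc (x : V) : T.IsStrongInterval (T.scc x) := by
  refine ⟨isInterval_scc x, fun Y hY ⟨w, hwC, hwY⟩ => ?_⟩
  by_cases hCY : T.scc x ⊆ Y
  · exact Or.inl hCY
  obtain ⟨c, hcC, hcY⟩ := not_subset.mp hCY
  exact Or.inr fun y hy =>
    ⟨hcC.1.trans (hY.reflTransGen_in hcY hwY hy (hcC.2.trans hwC.1)),
      (hY.reflTransGen_out hcY hwY hy (hwC.2.trans hcC.1)).trans hcC.2⟩

/-- Vertices of a proper strong interval are mutually reachable: otherwise the forward-closed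
set of one and the backward-closed set of another, both intervals, would lie inside it and
pin down the arcs to an outside vertex in contradictory directions. -/
theorem IsStrongInterval.subset_scc {Y : Set V} (hY : T.IsStrongInterval Y) (hYu : Y ≠ univ)
    {x : V} (hx : x ∈ Y) : Y ⊆ T.scc x := by
  obtain ⟨z, hz⟩ := ne_univ_iff_exists_notMem Y |>.mp hYu
  have reach : ∀ p ∈ Y, ∀ q ∈ Y, ReflTransGen T.arc p q := by
    intro p hp q hq
    by_contra hpq
    have hR : T.IsInterval {w | ReflTransGen T.arc p w} := fun v hv =>
      Or.inl fun w hw => arc_of_not_arc (fun e => hv (e ▸ hw)) fun hwv => hv (hw.tail hwv)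
    have hR' : T.IsInterval {w | ReflTransGen T.arc w q} := fun v hv =>
      Or.inr fun w hw => arc_of_not_arc (fun e => hv (e ▸ hw)) fun hvw => hv (hw.head hvw)
    have hRY : {w | ReflTransGen T.arc p w} ⊆ Y :=
      (hY.2 _ hR ⟨p, hp, ReflTransGen.refl⟩).resolve_left fun h => hpq (h hq)
    have hR'Y : {w | ReflTransGen T.arc w q} ⊆ Y :=
      (hY.2 _ hR' ⟨q, hq, ReflTransGen.refl⟩).resolve_left fun h => hpq (h hp)
    have hzp : T.arc z p :=
      arc_of_not_arc (fun e => hz (e ▸ hp)) fun h => hz (hRY (ReflTransGen.single h))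
    have hqz : T.arc q z :=
      arc_of_not_arc (fun e => hz (e ▸ hq)) fun h => hz (hR'Y (ReflTransGen.single h))
    rcases hY.1 z hz with h | h
    · exact arc_asymm hqz (h q hq)
    · exact arc_asymm hzp (h p hp)
  exact fun y hy => ⟨reach x hx y hy, reach y hy x hx⟩

theorem StronglyConnected.of_scc_eq_univ {x : V} (h : T.scc x = univ) : T.StronglyConnected :=
  fun u v huv =>
    have hu : u ∈ T.scc x := h ▸ mem_univ u
    have hv : v ∈ T.scc x := h ▸ mem_univ v
    (reflTransGen_iff_eq_or_transGen.mp (hu.2.trans hv.1)).resolve_left huv.symm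

theorem scc_mem_P {x : V} (h : T.scc x ≠ univ) : T.scc x ∈ T.P :=
  ⟨⟨x, mem_scc_self x⟩, h, isStrongInterval_scc x, fun _ hYu hY hCY =>
    hCY.antisymm (hY.subset_scc hYu (hCY (mem_scc_self x)))⟩

theorem eq_scc_of_mem_P (hT : ¬ T.StronglyConnected) {X : Set V} (hX : X ∈ T.P) {x : V}
    (hx : x ∈ X) : X = T.scc x :=
  hX.2.2.2 _ (fun h => hT (.of_scc_eq_univ h)) (isStrongInterval_scc x)
    (hX.2.2.1.subset_scc hX.2.1 hx)

theorem StronglyConnected.subset_scc {X : Set V} (hX : (T.restrict X).StronglyConnected)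
    {x : V} (hx : x ∈ X) : X ⊆ T.scc x := by
  intro y hy
  by_cases hxy : x = y
  · exact hxy ▸ mem_scc_self x
  have hne : (⟨x, hx⟩ : X) ≠ ⟨y, hy⟩ := fun e => hxy (congrArg Subtype.val e)
  exact ⟨((hX _ _ hne).lift Subtype.val fun _ _ h => h).to_reflTransGen,
    ((hX _ _ hne.symm).lift Subtype.val fun _ _ h => h).to_reflTransGen⟩

-- Every path between two vertices of a component stays inside it.
theorem stronglyConnected_restrict_scc (x : V) : (T.restrict (T.scc x)).StronglyConnected := by
  have lift : ∀ {u v} (hv : v ∈ T.scc x), ReflTransGen T.arc u v → ∀ hu : u ∈ T.scc x,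
      ReflTransGen (T.restrict (T.scc x)).arc ⟨u, hu⟩ ⟨v, hv⟩ := by
    intro u v hv h
    induction h using ReflTransGen.head_induction_on with
    | refl => exact fun _ => ReflTransGen.refl
    | @head u u' huu' hu'v ih =>
      intro hu
      have hu' : u' ∈ T.scc x := ⟨hu.1.tail huu', hu'v.trans hv.2⟩
      exact (ih hu').head (show (T.restrict (T.scc x)).arc ⟨u, hu⟩ ⟨u', hu'⟩ from huu')
  rintro ⟨u, hu⟩ ⟨v, hv⟩ huv
  exact (reflTransGen_iff_eq_or_transGen.mp (lift hv (hu.2.trans hv.1) hu)).resolve_left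
    (Ne.symm huv)

theorem scc_eq_of_cyc (h : ∀ x y z, T.Cyc x y z → T'.Cyc x y z ∨ T'.Cyc x z y)
    (h' : ∀ x y z, T'.Cyc x y z → T.Cyc x y z ∨ T.Cyc x z y) (x : V) :
    T.scc x = T'.scc x := by
  refine subset_antisymm ?_ ?_
  · exact ((stronglyConnected_restrict_scc x).restrict_of_cyc h).subset_scc (mem_scc_self x)
  · exact ((stronglyConnected_restrict_scc x).restrict_of_cyc h').subset_scc (mem_scc_self x)

theorem mem_Ptilde_of_mem_P {X : Set V} (hX : X ∈ T.P) (h2 : 2 ≤ X.ncard) : X ∈ T.Ptilde := by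
  by_cases hT : T.StronglyConnected
  · exact Or.inl ⟨hT, hX⟩
  · exact Or.inr ⟨hT, Or.inl ⟨hX, h2⟩⟩

theorem mem_P_of_mem_Ptilde (hT : ¬ T.StronglyConnected) {X : Set V} (hX : X ∈ T.Ptilde)
    (hXsc : (T.restrict X).StronglyConnected) {u v : V} (hu : u ∈ X) (hv : v ∈ X)
    (huv : u ≠ v) : X ∈ T.P := by
  rcases hX with ⟨hsc, -⟩ | ⟨-, ⟨hP, -⟩ | ⟨-, hsing, -⟩⟩
  · exact absurd hsc hT
  · exact hP
  · have hvu : v ∈ ({u} : Set V) :=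
      eq_scc_of_mem_P hT (hsing u hu) rfl ▸ hXsc.subset_scc hu hv
    exact absurd hvu huv.symm

end Components

end Tournament

namespace Finset

variable {V : Type*} [DecidableEq V]

def countBetween (Φ : Finset V → Prop) [DecidablePred Φ] (k : ℕ) (K L : Finset V) : ℕ :=
  #{P ∈ powersetCard k L | K ⊆ P ∧ Φ P}

variable (Φ Ψ : Finset V → Prop) [DecidablePred Φ] [DecidablePred Ψ] {k : ℕ}

theorem countBetween_eq_add (x : V) (K L : Finset V) :
    countBetween Φ k K L = countBetween Φ k (insert x K) L + countBetween Φ k K (L.erase x) := by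
  rw [countBetween, ← card_filter_add_card_filter_not (fun P => x ∈ P), filter_filter,
    filter_filter, countBetween, countBetween]
  congr 2
  · ext P
    simp only [mem_filter, insert_subset_iff]
    tauto
  · ext P
    simp only [mem_filter, mem_powersetCard, subset_erase]
    tauto

theorem sum_countBetween_erase (L : Finset V) :
    ∑ v ∈ L, countBetween Φ k ∅ (L.erase v) = (#L - k) * countBetween Φ k ∅ L := by
  have hbelow : ∀ P ∈ {P ∈ powersetCard k L | ∅ ⊆ P ∧ Φ P},
      #{v ∈ L | v ∉ P} = #L - k := by
    intro P hP
    simp only [mem_filter, mem_powersetCard] at hP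
    rw [filter_notMem_eq_sdiff, card_sdiff_of_subset hP.1.1, hP.1.2]
  calc ∑ v ∈ L, countBetween Φ k ∅ (L.erase v)
      = ∑ v ∈ L, #(bipartiteAbove (fun v P => v ∉ P)
          {P ∈ powersetCard k L | ∅ ⊆ P ∧ Φ P} v) := by
        refine sum_congr rfl fun v _ => congrArg card ?_
        ext P
        simp only [mem_bipartiteAbove, mem_filter, mem_powersetCard, subset_erase]
        tauto
    _ = ∑ P ∈ {P ∈ powersetCard k L | ∅ ⊆ P ∧ Φ P}, #{v ∈ L | v ∉ P} :=
        sum_card_bipartiteAbove_eq_sum_card_bipartiteBelow _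
    _ = (#L - k) * countBetween Φ k ∅ L := by
        rw [sum_congr rfl hbelow, sum_const, smul_eq_mul, mul_comm, countBetween]

variable [Fintype V] {m : ℕ}

theorem countBetween_univ_pos_iff (K : Finset V) :
    0 < countBetween Φ k K univ ↔ ∃ P, #P = k ∧ K ⊆ P ∧ Φ P := by
  simp [countBetween, card_pos, Finset.Nonempty]

theorem countBetween_empty_eq_of_card_le (hk : k + m ≤ Fintype.card V)
    (h : ∀ L : Finset V, #L = Fintype.card V - m →
      countBetween Φ k ∅ L = countBetween Ψ k ∅ L)
    (L : Finset V) (hL : Fintype.card V - m ≤ #L) :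
    countBetween Φ k ∅ L = countBetween Ψ k ∅ L := by
  obtain ⟨j, hj⟩ := Nat.exists_eq_add_of_le hL
  induction j generalizing L with
  | zero => exact h L hj
  | succ j ih =>
    have hsum : ∑ v ∈ L, countBetween Φ k ∅ (L.erase v) =
        ∑ v ∈ L, countBetween Ψ k ∅ (L.erase v) :=
      sum_congr rfl fun v hv => ih _ (by rw [card_erase_of_mem hv]; omega)
        (by rw [card_erase_of_mem hv]; omega)
    rw [sum_countBetween_erase, sum_countBetween_erase] at hsum
    exact Nat.eq_of_mul_eq_mul_left (by omega) hsum

theorem countBetween_univ_eq (hk : k + m ≤ Fintype.card V)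
    (h : ∀ L : Finset V, #L = Fintype.card V - m →
      countBetween Φ k ∅ L = countBetween Ψ k ∅ L)
    (K : Finset V) (hK : #K ≤ m) :
    countBetween Φ k K univ = countBetween Ψ k K univ := by
  suffices key : ∀ L : Finset V, Fintype.card V - m + #K ≤ #L →
      countBetween Φ k K L = countBetween Ψ k K L from
    key univ (by rw [card_univ]; omega)
  induction K using Finset.induction_on with
  | empty => exact fun L hL => countBetween_empty_eq_of_card_le Φ Ψ hk h L (by simpa using hL)
  | insert x K hx ih =>
    intro L hL
    rw [card_insert_of_notMem hx] at hL
    have e₁ := ih (by rw [card_insert_of_notMem hx] at hK; omega) L (by omega)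
    have e₂ := ih (by rw [card_insert_of_notMem hx] at hK; omega) (L.erase x)
      (by have := pred_card_le_card_erase (s := L) (a := x); omega)
    have s₁ := countBetween_eq_add Φ (k := k) x K L
    have s₂ := countBetween_eq_add Ψ (k := k) x K L
    omega

end Finset

namespace Tournament

open Finset Relation

variable {V : Type*} {T T' : Tournament V}

section Hypomorphy

def IsoInvariant (Φ : Tournament V → Finset V → Prop) : Prop :=
  ∀ (T T' : Tournament V) (σ : Equiv.Perm V) (P : Finset V),
    (∀ x ∈ P, ∀ y ∈ P, T.arc x y ↔ T'.arc (σ x) (σ y)) → Φ T P →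
      Φ T' (P.map σ.toEmbedding)

variable [DecidableEq V]

theorem card_filter_le_of_iso {Φ : Tournament V → Finset V → Prop} (hΦ : IsoInvariant Φ)
    {L : Finset V} (h : (T.restrict L).Iso (T'.restrict L)) (k : ℕ)
    [DecidablePred (Φ T)] [DecidablePred (Φ T')] :
    #{P ∈ powersetCard k L | Φ T P} ≤ #{P ∈ powersetCard k L | Φ T' P} := by
  classical
  obtain ⟨e, he⟩ := h
  set σ : Equiv.Perm V := Equiv.Perm.ofSubtype e
  have hσ : ∀ x (hx : x ∈ L), σ x = e ⟨x, hx⟩ := fun x hx =>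
    Equiv.Perm.ofSubtype_apply_of_mem e hx
  refine card_le_card_of_injOn (fun P => P.map σ.toEmbedding) (fun P hP => ?_)
    (fun P _ Q _ h => map_injective _ h)
  simp only [coe_filter, mem_powersetCard, Set.mem_ofPred_eq] at hP ⊢
  refine ⟨⟨fun y hy => ?_, by rw [card_map, hP.1.2]⟩,
    hΦ T T' σ P (fun x hx y hy => ?_) hP.2⟩
  · obtain ⟨x, hx, rfl⟩ := mem_map.mp hy
    rw [Equiv.toEmbedding_apply, hσ x (hP.1.1 hx)]
    exact (e _).2
  · rw [hσ x (hP.1.1 hx), hσ y (hP.1.1 hy)]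
    exact he ⟨x, hP.1.1 hx⟩ ⟨y, hP.1.1 hy⟩

variable [Fintype V] {m k : ℕ}

theorem MinusHypo.countBetween_eq (hyp : T.MinusHypo T' m) {Φ : Tournament V → Finset V → Prop}
    (hΦ : IsoInvariant Φ) (hk : k + m ≤ Fintype.card V) (K : Finset V) (hK : #K ≤ m)
    [DecidablePred (Φ T)] [DecidablePred (Φ T')] :
    countBetween (Φ T) k K univ = countBetween (Φ T') k K univ := by
  refine countBetween_univ_eq _ _ hk (fun L hL => ?_) K hK
  have hiso := hyp L (by rw [Set.ncard_coe_finset, hL])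
  simp only [countBetween, empty_subset, true_and]
  exact le_antisymm (card_filter_le_of_iso hΦ hiso k) (card_filter_le_of_iso hΦ hiso.symm k)

theorem MinusHypo.exists_superset (hyp : T.MinusHypo T' m) {Φ : Tournament V → Finset V → Prop}
    (hΦ : IsoInvariant Φ) (hk : k + m ≤ Fintype.card V) {K : Finset V} (hK : #K ≤ m)
    (h : ∃ P, #P = k ∧ K ⊆ P ∧ Φ T P) : ∃ P, #P = k ∧ K ⊆ P ∧ Φ T' P := by
  classical
  rw [← countBetween_univ_pos_iff] at h ⊢
  rwa [← hyp.countBetween_eq hΦ hk K hK]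

end Hypomorphy

/-- On three vertices this says that `P` spans a cyclic triangle. -/
def SinkFreeOn (T : Tournament V) (P : Finset V) : Prop := ∀ x ∈ P, ∃ y ∈ P, T.arc x y

theorem isoInvariant_sinkFreeOn : IsoInvariant (V := V) SinkFreeOn := by
  intro T T' σ P hσ h y hy
  obtain ⟨x, hx, rfl⟩ := mem_map.mp hy
  obtain ⟨z, hz, hxz⟩ := h x hx
  exact ⟨σ z, mem_map_of_mem _ hz, (hσ x hx z hz).mp hxz⟩

variable [DecidableEq V]

theorem Cyc.sinkFreeOn {x y z : V} (h : T.Cyc x y z) : T.SinkFreeOn {x, y, z} := by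
  intro w hw
  simp only [mem_insert, mem_singleton] at hw
  rcases hw with rfl | rfl | rfl
  exacts [⟨y, by simp, h.1⟩, ⟨z, by simp, h.2.1⟩, ⟨x, by simp, h.2.2⟩]

theorem SinkFreeOn.cyc_or_cyc {x y z : V} (h : T.SinkFreeOn {x, y, z}) :
    T.Cyc x y z ∨ T.Cyc x z y := by
  have hx := h x (by simp)
  have hy := h y (by simp)
  have hz := h z (by simp)
  simp only [mem_insert, mem_singleton, exists_eq_or_imp, exists_eq_left] at hx hy hz
  have := T.irrefl x; have := T.irrefl y; have := T.irrefl z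
  have := @arc_asymm _ T x y; have := @arc_asymm _ T y z; have := @arc_asymm _ T z x
  unfold Cyc
  tauto

theorem Cyc.card_eq {x y z : V} (h : T.Cyc x y z) : #{x, y, z} = 3 :=
  card_eq_three.mpr ⟨x, y, z, ne_of_arc h.1, (ne_of_arc h.2.2).symm, ne_of_arc h.2.1, rfl⟩

/-- `Q` spans a copy of `δ⁻` (`DeltaMinus`) with centre `c`. -/
def IsNegDiamondOn (T : Tournament V) (Q : Finset V) : Prop :=
  ∃ c x y z, T.Cyc x y z ∧ T.arc c x ∧ T.arc c y ∧ T.arc c z ∧ Q = {c, x, y, z}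

theorem isoInvariant_isNegDiamondOn : IsoInvariant (V := V) IsNegDiamondOn := by
  rintro T T' σ Q hσ ⟨c, x, y, z, hxyz, hcx, hcy, hcz, rfl⟩
  have h : ∀ {u v}, u ∈ ({c, x, y, z} : Finset V) → v ∈ ({c, x, y, z} : Finset V) →
      T.arc u v → T'.arc (σ u) (σ v) := fun hu hv huv => (hσ _ hu _ hv).mp huv
  refine ⟨σ c, σ x, σ y, σ z, ⟨h ?_ ?_ hxyz.1, h ?_ ?_ hxyz.2.1, h ?_ ?_ hxyz.2.2⟩,
    h ?_ ?_ hcx, h ?_ ?_ hcy, h ?_ ?_ hcz, by simp⟩ <;> simp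

theorem IsNegDiamondOn.card_eq {Q : Finset V} (h : T.IsNegDiamondOn Q) : #Q = 4 := by
  obtain ⟨c, x, y, z, hxyz, hcx, hcy, hcz, rfl⟩ := h
  rw [card_insert_of_notMem (by simp [ne_of_arc hcx, ne_of_arc hcy, ne_of_arc hcz]),
    hxyz.card_eq]

theorem IsNegDiamondOn.exists_arc {Q : Finset V} (hQ : T.IsNegDiamondOn Q) {a y z : V}
    (ha : a ∈ Q) (hy : y ∈ Q) (hz : z ∈ Q) (hyz : y ≠ z) (hya : T.arc y a)
    (hza : T.arc z a) :
    ∃ v, T.arc a v ∧ (T.arc v y ∨ T.arc v z) := by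
  obtain ⟨c, x₁, x₂, x₃, hcyc, h₁, h₂, h₃, rfl⟩ := hQ
  simp only [mem_insert, mem_singleton] at ha hy hz
  have key : ∀ {u v w}, T.Cyc u v w → T.arc c u → T.arc c v → T.arc c w → a = u →
      (y = c ∨ y = u ∨ y = v ∨ y = w) → (z = c ∨ z = u ∨ z = v ∨ z = w) →
      ∃ v, T.arc a v ∧ (T.arc v y ∨ T.arc v z) := by
    rintro u v w ⟨huv, hvw, hwu⟩ - hcv hcw rfl hy hz
    refine ⟨v, huv, ?_⟩
    rcases hy with rfl | rfl | rfl | rfl <;> rcases hz with rfl | rfl | rfl | rfl <;>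
      first
      | exact absurd rfl hyz
      | exact absurd hya (T.irrefl _)
      | exact absurd hza (T.irrefl _)
      | exact absurd hya (arc_asymm huv)
      | exact absurd hza (arc_asymm huv)
      | exact Or.inl hvw
      | exact Or.inr hvw
  rcases ha with rfl | rfl | rfl | rfl
  · rcases hy with rfl | rfl | rfl | rfl <;>
      first
      | exact absurd hya (T.irrefl _)
      | exact absurd hya (arc_asymm h₁)
      | exact absurd hya (arc_asymm h₂)
      | exact absurd hya (arc_asymm h₃)
  · exact key hcyc h₁ h₂ h₃ rfl hy hz
  · exact key hcyc.rotate h₂ h₃ h₁ rfl (by tauto) (by tauto)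
  · exact key hcyc.rotate.rotate h₃ h₁ h₂ rfl (by tauto) (by tauto)

/-- Were `X → a` in `T'`, the extra vertex `v` of a copy of `δ⁻` in `T'` through `{a, p, q}`
would close a triangle `a → v → p → a` of `T'`; read in `T`, it puts `a` into the component
`X`. -/
theorem arc_of_arc_of_eq_scc
    (hcyc : ∀ x y z, T'.Cyc x y z → T.Cyc x y z ∨ T.Cyc x z y)
    (hdiam : ∀ K : Finset V, #K = 3 → (∃ Q, K ⊆ Q ∧ T.IsNegDiamondOn Q) →
      ∃ Q, K ⊆ Q ∧ T'.IsNegDiamondOn Q)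
    {X : Set V} {x p q r a : V} (hX : X = T.scc x) (hX' : T'.IsInterval X)
    (hp : p ∈ X) (hq : q ∈ X) (hr : r ∈ X) (hpqr : T.Cyc p q r) (ha : a ∉ X)
    (hdom : ∀ y ∈ X, T.arc a y) : ∀ y ∈ X, T'.arc a y := by
  refine (hX' a ha).resolve_right fun hdom' => ?_
  have hK : #{a, p, q} = 3 := card_eq_three.mpr
    ⟨a, p, q, ne_of_arc (hdom p hp), ne_of_arc (hdom q hq), ne_of_arc hpqr.1, rfl⟩
  obtain ⟨Q, hKQ, hQ⟩ := hdiam _ hK ⟨{a, p, q, r}, by simp [insert_subset_iff],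
    ⟨a, p, q, r, hpqr, hdom p hp, hdom q hq, hdom r hr, rfl⟩⟩
  obtain ⟨v, hav, hvpq⟩ := hQ.exists_arc (hKQ (by simp)) (hKQ (by simp)) (hKQ (by simp))
    (ne_of_arc hpqr.1) (hdom' p hp) (hdom' q hq)
  have hvX : v ∉ X := fun hv => arc_asymm hav (hdom' v hv)
  have hvp : T'.arc v p := by
    rcases hX' v hvX with h | h
    · exact h p hp
    · rcases hvpq with h' | h'
      · exact absurd (h p hp) (arc_asymm h')
      · exact absurd (h q hq) (arc_asymm h')
  rcases hcyc a v p ⟨hav, hvp, hdom' p hp⟩ with h | ⟨-, hpv, hva⟩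
  · exact arc_asymm (hdom p hp) h.2.2
  · subst hX
    exact ha ⟨hp.1.trans ((ReflTransGen.single hpv).tail hva),
      (ReflTransGen.single (hdom p hp)).trans hp.2⟩

variable [Fintype V]

theorem MinusHypo.cyc_or_cyc (hyp : T.MinusHypo T' 3) (hn : 6 ≤ Fintype.card V) {x y z : V}
    (h : T.Cyc x y z) : T'.Cyc x y z ∨ T'.Cyc x z y := by
  obtain ⟨P, hP, hsub, hP'⟩ := hyp.exists_superset isoInvariant_sinkFreeOn (k := 3) (by omega)
    h.card_eq.le ⟨_, h.card_eq, Subset.rfl, h.sinkFreeOn⟩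
  rw [← eq_of_subset_of_card_le hsub (hP.trans h.card_eq.symm).le] at hP'
  exact hP'.cyc_or_cyc

theorem MinusHypo.exists_negDiamond (hyp : T.MinusHypo T' 3) (hn : 7 ≤ Fintype.card V)
    {K : Finset V} (hK : #K = 3) (h : ∃ Q, K ⊆ Q ∧ T.IsNegDiamondOn Q) :
    ∃ Q, K ⊆ Q ∧ T'.IsNegDiamondOn Q := by
  obtain ⟨Q, hKQ, hQ⟩ := h
  obtain ⟨Q', -, hKQ', hQ'⟩ := hyp.exists_superset isoInvariant_isNegDiamondOn (k := 4)
    (by omega) hK.le ⟨Q, hQ.card_eq, hKQ, hQ⟩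
  exact ⟨Q', hKQ', hQ'⟩

end Tournament

theorem stmt19_general {V : Type*} [Fintype V] (T T' : Tournament V)
    (hnsc : ¬ T.StronglyConnected)
    (hcard : 9 ≤ Fintype.card V) (hyp : Tournament.MinusHypo T T' 3)
    (X : Set V) (hX : X ∈ T.Ptilde) (hXsc : (T.restrict X).StronglyConnected)
    (hX3 : 3 ≤ X.ncard) (a : V) (ha : a ∉ X) :
    (T'.restrict X).StronglyConnected ∧ X ∈ T'.Ptilde ∧
      ((∀ y ∈ X, T.arc a y) ↔ (∀ y ∈ X, T'.arc a y)) := by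
  classical
  obtain ⟨u, v, hu, hv, huv⟩ := (Set.one_lt_ncard_iff X.toFinite).mp (by omega)
  have hcyc : ∀ x y z, T.Cyc x y z → T'.Cyc x y z ∨ T'.Cyc x z y :=
    fun _ _ _ => hyp.cyc_or_cyc (by omega)
  have hcyc' : ∀ x y z, T'.Cyc x y z → T.Cyc x y z ∨ T.Cyc x z y :=
    fun _ _ _ => hyp.symm.cyc_or_cyc (by omega)
  have hXT : X = T.scc u := Tournament.eq_scc_of_mem_P hnsc
    (Tournament.mem_P_of_mem_Ptilde hnsc hX hXsc hu hv huv) hu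
  have hXT' : X = T'.scc u := hXT.trans (Tournament.scc_eq_of_cyc hcyc hcyc' u)
  have hXsc' : (T'.restrict X).StronglyConnected := hXsc.restrict_of_cyc hcyc
  have hXP' : X ∈ T'.P :=
    hXT' ▸ Tournament.scc_mem_P fun h => ha (hXT' ▸ h ▸ Set.mem_univ a)
  obtain ⟨p, hp, q, hq, r, hr, hpqr⟩ := hXsc.exists_cyc_of_restrict hu hv huv
  obtain ⟨p', hp', q', hq', r', hr', hpqr'⟩ := hXsc'.exists_cyc_of_restrict hu hv huv
  refine ⟨hXsc', Tournament.mem_Ptilde_of_mem_P hXP' (by omega), fun h => ?_, fun h => ?_⟩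
  · exact Tournament.arc_of_arc_of_eq_scc hcyc' (fun _ hK => hyp.exists_negDiamond (by omega) hK)
      hXT (hXT' ▸ Tournament.isInterval_scc u) hp hq hr hpqr ha h
  · exact Tournament.arc_of_arc_of_eq_scc hcyc
      (fun _ hK => hyp.symm.exists_negDiamond (by omega) hK) hXT'
      (hXT ▸ Tournament.isInterval_scc u) hp' hq' hr' hpqr' ha h

/-- Let `T` be a non-strongly connected, non-transitive
tournament on `V` with `|V| = n ≥ 9`, and `T'` a tournament on `V` that is
`{-3}`-hypomorphic to `T`. Let `X ∈ P̃(T)` be such that `T[X]` is strongly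
connected and `|X| ≥ 3`, and let `a ∈ V∖X`. Then `T'[X]` is strongly
connected, `X ∈ P̃(T')`, and `a` dominates every vertex of `X` in `T` iff `a`
dominates every vertex of `X` in `T'`. -/
theorem stmt19 {V : Type*} [Fintype V] (T T' : Tournament V)
    (hnsc : ¬ T.StronglyConnected) (hnt : ¬ T.Transitive)
    (hcard : 9 ≤ Fintype.card V) (hyp : Tournament.MinusHypo T T' 3)
    (X : Set V) (hX : X ∈ T.Ptilde) (hXsc : (T.restrict X).StronglyConnected)
    (hX3 : 3 ≤ X.ncard) (a : V) (ha : a ∉ X) :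
    (T'.restrict X).StronglyConnected ∧ X ∈ T'.Ptilde ∧
      ((∀ y ∈ X, T.arc a y) ↔ (∀ y ∈ X, T'.arc a y)) :=
  stmt19_general T T' hnsc hcard hyp X hX hXsc hX3 a ha
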